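/- arXiv:2512.24096 — 3 statements merged into one kernel-verified Lean document; each statement's English description precedes it below -/
import Mathlib

section
/- Suppose 𝒴 = {0,1}. Let 𝒫*_U be the set of primitive distributions satisfying IV validity, P*(Y(0)=0) = 1, and P*(D(z,1)=1) = 1 for all z ∈ 𝒵 (universal release). Fix an observed data distribution P with P(Z=z) > 0 and P(Y=1, D=0 | Z=z) = 0 for all z ∈ 𝒵. Then the identified set for the average counterfactual outcome satisfies Θ_I(P; 𝒫*_U) = ⋂_{z∈𝒵} [ P(Y=1, D=1 | Z=z), 1 − P(Y=0, D=1 | Z=z) ]; that is, a value v ∈ [0,1] belongs to Θ_I(P; 𝒫*_U) if and only if P(Y=1, D=1 | Z=z) ≤ v ≤ 1 − P(Y=0, D=1 | Z=z) for every z ∈ 𝒵. -/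
open Finset
open scoped Classical

namespace IVPol

/-- Sample space of model primitives `(Y(0), Y(1), D(·,·), Z)`:
a point records the two potential outcomes (elements of the finite outcome set `Y ⊆ ℝ`),
the potential treatments `D(z, a) ∈ {0,1}` for every judge `z` and policy `a`,
and the instrument value `Z`. -/
abbrev Prim (Y : Finset ℝ) (K : ℕ) := Y × Y × (Fin K → Bool → Bool) × Fin K

/-- Sample space of the observed data `(Y, D, Z)`. -/
abbrev Obs (Y : Finset ℝ) (K : ℕ) := Y × Bool × Fin K

/-- A probability distribution on a finite type, given by its pmf. -/
structure Dist (α : Type*) [Fintype α] where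
  p : α → ℝ
  nonneg : ∀ a, 0 ≤ p a
  sum_one : ∑ a, p a = 1

/-- Probability of an event. -/
noncomputable def Dist.pr {α : Type*} [Fintype α] (P : Dist α) (A : Set α) : ℝ :=
  ∑ a, if a ∈ A then P.p a else 0

/-- Expectation of a real-valued random variable. -/
noncomputable def Dist.exp {α : Type*} [Fintype α] (P : Dist α) (f : α → ℝ) : ℝ :=
  ∑ a, P.p a * f a

variable {Y : Finset ℝ} {K : ℕ}

/-- Potential treatment `D(z, a)`. -/
def pd (ω : Prim Y K) (z : Fin K) (a : Bool) : Bool := ω.2.2.1 z a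

/-- The instrument `Z`. -/
def pz (ω : Prim Y K) : Fin K := ω.2.2.2

/-- Observed treatment `D = D(Z, 0)`. -/
def obsD (ω : Prim Y K) : Bool := pd ω (pz ω) false

/-- Observed outcome `Y = Y(D(Z, 0))`. -/
def obsY (ω : Prim Y K) : Y := if obsD ω then ω.2.1 else ω.1

/-- Counterfactual outcome `Y(D(Z, 1))`. -/
noncomputable def cfY (ω : Prim Y K) : ℝ :=
  if pd ω (pz ω) true then (ω.2.1 : ℝ) else (ω.1 : ℝ)

/-- IV validity: `(Y(0), Y(1), D(·,·))` is independent of `Z`. -/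
def IVvalid (Ps : Dist (Prim Y K)) : Prop :=
  ∀ (a b : Y) (g : Fin K → Bool → Bool) (z : Fin K),
    Ps.pr {ω | ω.1 = a ∧ ω.2.1 = b ∧ ω.2.2.1 = g ∧ ω.2.2.2 = z}
      = Ps.pr {ω | ω.1 = a ∧ ω.2.1 = b ∧ ω.2.2.1 = g} * Ps.pr {ω | ω.2.2.2 = z}

/-- `Ps` generates the observed data distribution `P`:
the law of `(Y(D(Z,0)), D(Z,0), Z)` under `Ps` is `P`. -/
def generates (Ps : Dist (Prim Y K)) (P : Dist (Obs Y K)) : Prop :=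
  ∀ (y : Y) (d : Bool) (z : Fin K),
    P.p (y, d, z) = Ps.pr {ω | obsY ω = y ∧ obsD ω = d ∧ pz ω = z}

/-- Marginal pmf of judge `z`:
`π_z(y0, y1, d0, d1) = P*(Y(0)=y0, Y(1)=y1, D(z,0)=d0, D(z,1)=d1)`. -/
noncomputable def marginal (Ps : Dist (Prim Y K)) (z : Fin K) (y0 y1 : Y) (d0 d1 : Bool) : ℝ :=
  Ps.pr {ω | ω.1 = y0 ∧ ω.2.1 = y1 ∧ pd ω z false = d0 ∧ pd ω z true = d1}

/-- Probability of `Z = z` under the observed distribution. -/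
noncomputable def prZ (P : Dist (Obs Y K)) (z : Fin K) : ℝ := P.pr {o | o.2.2 = z}

/-- Conditional probability `P(Y = y, D = d | Z = z)` of the observed data. -/
noncomputable def obsCond (P : Dist (Obs Y K)) (y : Y) (d : Bool) (z : Fin K) : ℝ :=
  P.p (y, d, z) / prZ P z

/-- Average counterfactual outcome `θ = E[Y(D(Z,1))]`. -/
noncomputable def theta (Ps : Dist (Prim Y K)) : ℝ := Ps.exp cfY

/-- The identified set for the average counterfactual outcome. -/
def ThetaI (P : Dist (Obs Y K)) (fam : Set (Dist (Prim Y K))) : Set ℝ :=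
  {t | ∃ Ps ∈ fam, generates Ps P ∧ theta Ps = t}

/-- The binary outcome set `𝒴 = {0, 1}`. -/
noncomputable abbrev Y01 : Finset ℝ := {0, 1}

/-- The family `𝒫*_U`: IV validity, known outcome `Y(0) = 0`, and universal release
`D(z,1) = 1` for all judges `z`. -/
def famU (K : ℕ) : Set (Dist (Prim Y01 K)) :=
  {Ps | IVvalid Ps ∧ Ps.pr {ω | (ω.1 : ℝ) = 0} = 1 ∧
        ∀ z : Fin K, Ps.pr {ω | pd ω z true = true} = 1}

/-! Under universal release `θ = P*(Y(1) = 1)`, and IV validity factorises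
`P(Y=y, D=1, Z=z) = P*(Y(1)=y, D(z,0)=1) · P(Z=z)`, which bounds `θ` from both sides.
Conversely, for `v` in every interval let `Y(1) ~ Bernoulli(v)` and, given `Y(1)`, let the
`D(z,0)` be independent across `z` with `P(D(z,0)=1 | Y(1)=1) = P(Y=1,D=1 | Z=z) / v` and
`P(D(z,0)=1 | Y(1)=0) = P(Y=0,D=1 | Z=z) / (1 - v)`; with `Y(0) = 0`, `D(z,1) = 1` and an
independent instrument drawn from the observed law of `Z`, this primitive law generates `P`
and has `θ = v`. -/

namespace Dist

variable {α β ι : Type*} [Fintype α] [Fintype β] [Fintype ι]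

theorem ext {P Q : Dist α} (h : P.p = Q.p) : P = Q := by
  cases P; cases Q; cases h; rfl

theorem pr_nonneg (P : Dist α) (A : Set α) : 0 ≤ P.pr A :=
  Finset.sum_nonneg fun a _ => by split_ifs <;> simp [P.nonneg a]

theorem pr_mono (P : Dist α) {A B : Set α} (h : A ⊆ B) : P.pr A ≤ P.pr B :=
  Finset.sum_le_sum fun a _ => by
    by_cases hA : a ∈ A
    · simp [hA, h hA]
    · simp only [hA, if_false]; split_ifs <;> simp [P.nonneg a]

@[simp]
theorem pr_empty (P : Dist α) : P.pr ∅ = 0 := by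
  simp [pr]

theorem pr_univ (P : Dist α) : P.pr Set.univ = 1 := by
  simp [pr, P.sum_one]

theorem pr_compl (P : Dist α) (A : Set α) : P.pr Aᶜ = 1 - P.pr A := by
  rw [← P.pr_univ, pr, pr, pr, eq_sub_iff_add_eq, ← Finset.sum_add_distrib]
  refine Finset.sum_congr rfl fun a _ => ?_
  by_cases ha : a ∈ A <;> simp [ha]

theorem p_le_pr (P : Dist α) {A : Set α} {a : α} (ha : a ∈ A) : P.p a ≤ P.pr A := by
  have := Finset.single_le_sum (f := fun b => if b ∈ A then P.p b else 0)
    (fun b _ => by split_ifs <;> simp [P.nonneg b]) (Finset.mem_univ a)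
  rw [pr]; simpa [ha] using this

theorem mem_of_pr_eq_one (P : Dist α) {A : Set α} (hA : P.pr A = 1) {a : α}
    (ha : P.p a ≠ 0) : a ∈ A := by
  by_contra h
  have := P.p_le_pr (A := Aᶜ) h
  rw [pr_compl, hA, sub_self] at this
  exact ha (le_antisymm this (P.nonneg a))

theorem nonempty (P : Dist α) : Nonempty α := by
  by_contra h
  have := P.sum_one
  simp [not_nonempty_iff.mp h] at this

theorem pr_singleton (P : Dist α) (a : α) : P.pr {a} = P.p a := by
  simp [pr]

noncomputable def map (f : α → β) (P : Dist α) : Dist β where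
  p b := P.pr {a | f a = b}
  nonneg b := P.pr_nonneg _
  sum_one := by
    simp only [pr, Set.mem_ofPred_eq]
    rw [Finset.sum_comm]
    simpa using P.sum_one

theorem pr_map (f : α → β) (P : Dist α) (B : Set β) : (P.map f).pr B = P.pr (f ⁻¹' B) := by
  simp only [pr, map, Set.mem_ofPred_eq, Set.mem_preimage, ite_sum_zero]
  rw [Finset.sum_comm]
  refine Finset.sum_congr rfl fun a _ => ?_
  rw [Finset.sum_eq_single (f a) (fun b _ hb => by simp [Ne.symm hb]) (by simp)]
  simp

noncomputable def bind (μ : Dist α) (κ : α → Dist β) : Dist (α × β) where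
  p x := μ.p x.1 * (κ x.1).p x.2
  nonneg x := mul_nonneg (μ.nonneg _) ((κ _).nonneg _)
  sum_one := by simp [Fintype.sum_prod_type, ← Finset.mul_sum, (κ _).sum_one, μ.sum_one]

theorem pr_bind (μ : Dist α) (κ : α → Dist β) (S : Set (α × β)) :
    (μ.bind κ).pr S = ∑ a, μ.p a * (κ a).pr {b | (a, b) ∈ S} := by
  simp only [pr, bind, Fintype.sum_prod_type, Finset.mul_sum, Set.mem_ofPred_eq]
  refine Finset.sum_congr rfl fun a _ => Finset.sum_congr rfl fun b _ => ?_
  split_ifs <;> simp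

noncomputable def prod (μ : Dist α) (ν : Dist β) : Dist (α × β) := μ.bind fun _ => ν

theorem pr_prod (μ : Dist α) (ν : Dist β) (A : Set α) (B : Set β) :
    (μ.prod ν).pr (A ×ˢ B) = μ.pr A * ν.pr B := by
  rw [prod, pr_bind, pr, Finset.sum_mul]
  refine Finset.sum_congr rfl fun a _ => ?_
  by_cases ha : a ∈ A <;> simp [ha, Set.mem_prod]

noncomputable def pi [DecidableEq ι] (Q : ι → Dist β) : Dist (ι → β) where
  p x := ∏ i, (Q i).p (x i)
  nonneg x := Finset.prod_nonneg fun i _ => (Q i).nonneg _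
  sum_one := by
    rw [← Fintype.prod_sum]
    simp [(Q _).sum_one]

theorem pr_pi_eval [DecidableEq ι] (Q : ι → Dist β) (i : ι) (B : Set β) :
    (pi Q).pr {x | x i ∈ B} = (Q i).pr B := by
  let f : ι → β → ℝ := fun j c =>
    if j = i then (if c ∈ B then (Q j).p c else 0) else (Q j).p c
  have hrow : ∀ x : ι → β,
      ∏ j, f j (x j) = if x i ∈ B then ∏ j, (Q j).p (x j) else 0 := by
    intro x
    split_ifs with hx
    · exact Finset.prod_congr rfl fun j _ => by by_cases hj : j = i <;> simp [f, hj, hx]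
    · exact Finset.prod_eq_zero (Finset.mem_univ i) (by simp [f, hx])
  have hcol : ∀ j, ∑ c, f j c = if j = i then (Q i).pr B else 1 := by
    intro j
    by_cases hj : j = i
    · subst hj; simp [f, pr]
    · simp [f, hj, (Q j).sum_one]
  simp only [pr, pi, Set.mem_ofPred_eq]
  simp_rw [← hrow, ← Fintype.prod_sum, hcol]
  simp [pr]

noncomputable def bernoulli (r : ℝ) (h0 : 0 ≤ r) (h1 : r ≤ 1) : Dist Bool where
  p b := if b then r else 1 - r
  nonneg b := by cases b <;> simp [h0, h1]
  sum_one := by simp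

end Dist

def obs (ω : Prim Y K) : Obs Y K := (obsY ω, obsD ω, pz ω)

theorem generates.pr_eq {Ps : Dist (Prim Y K)} {P : Dist (Obs Y K)} (h : generates Ps P)
    (A : Set (Obs Y K)) : P.pr A = Ps.pr (obs ⁻¹' A) := by
  have : Ps.map obs = P := Dist.ext <| funext fun ⟨y, d, z⟩ => by
    rw [h y d z]
    simp [Dist.map, obs]
  rw [← this, Dist.pr_map]

theorem generates.prZ_eq {Ps : Dist (Prim Y K)} {P : Dist (Obs Y K)} (h : generates Ps P)
    (z : Fin K) : prZ P z = Ps.pr {ω | pz ω = z} :=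
  h.pr_eq _

def potentials (ω : Prim Y K) : Y × Y × (Fin K → Bool → Bool) := (ω.1, ω.2.1, ω.2.2.1)

theorem IVvalid.pr_and_pz_eq {Ps : Dist (Prim Y K)} (h : IVvalid Ps)
    (S : Set (Y × Y × (Fin K → Bool → Bool))) (z : Fin K) :
    Ps.pr {ω | potentials ω ∈ S ∧ pz ω = z}
      = Ps.pr (potentials ⁻¹' S) * Ps.pr {ω | pz ω = z} := by
  have hjoint : Ps.map (fun ω => (potentials ω, pz ω)) = (Ps.map potentials).prod (Ps.map pz) :=
    Dist.ext <| funext fun ⟨⟨a, b, g⟩, z⟩ => by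
      simpa [Dist.map, Dist.prod, Dist.bind, potentials, pz, Prod.ext_iff, and_assoc]
        using h a b g z
  calc Ps.pr {ω | potentials ω ∈ S ∧ pz ω = z}
      = (Ps.map fun ω => (potentials ω, pz ω)).pr (S ×ˢ {z}) := by rw [Dist.pr_map]; rfl
    _ = Ps.pr (potentials ⁻¹' S) * Ps.pr {ω | pz ω = z} := by
      rw [hjoint, Dist.pr_prod, Dist.pr_map, Dist.pr_map]; rfl

theorem ivValid_map_prod {α : Type*} [Fintype α] (M : Dist α) (π : Dist (Fin K))
    (G : α → Y × Y × (Fin K → Bool → Bool)) :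
    IVvalid ((M.prod π).map fun x => ((G x.1).1, (G x.1).2.1, (G x.1).2.2, x.2)) := by
  intro a b g z
  simp only [Dist.pr_map]
  calc _ = (M.prod π).pr ((G ⁻¹' {(a, b, g)}) ×ˢ {z}) := by
        congr 1; ext; simp [Prod.ext_iff, and_assoc]
    _ = (M.prod π).pr ((G ⁻¹' {(a, b, g)}) ×ˢ Set.univ)
          * (M.prod π).pr (Set.univ ×ˢ {z}) := by
        simp [Dist.pr_prod, Dist.pr_univ]
    _ = _ := by
        congr 2 <;> ext <;> simp [Prod.ext_iff]

theorem obsCond_true_le {Ps : Dist (Prim Y K)} {P : Dist (Obs Y K)} (hIV : IVvalid Ps)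
    (hgen : generates Ps P) (y : Y) (z : Fin K) :
    obsCond P y true z ≤ Ps.pr {ω | ω.2.1 = y} := by
  have hjoint : P.p (y, true, z)
      = Ps.pr {ω | potentials ω ∈ {u | u.2.1 = y ∧ u.2.2 z false = true} ∧ pz ω = z} := by
    rw [← Dist.pr_singleton, hgen.pr_eq]
    congr 1
    ext ⟨a, b, g, z'⟩
    simp only [obs, obsY, obsD, pd, pz, potentials, Set.mem_preimage, Set.mem_singleton_iff,
      Set.mem_ofPred_eq, Prod.mk.injEq]
    constructor
    · rintro ⟨hy, hd, rfl⟩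
      simp_all
    · rintro ⟨⟨hy, hd⟩, rfl⟩
      simp_all
  rw [hIV.pr_and_pz_eq, ← hgen.prZ_eq] at hjoint
  refine div_le_of_le_mul₀ (Dist.pr_nonneg _ _) (Dist.pr_nonneg _ _) (hjoint.trans_le ?_)
  exact mul_le_mul_of_nonneg_right (Dist.pr_mono _ fun ω hω => hω.1) (Dist.pr_nonneg _ _)

theorem prZ_eq_sum (P : Dist (Obs Y K)) (z : Fin K) : prZ P z = ∑ y, ∑ d, P.p (y, d, z) := by
  simp only [prZ, Dist.pr, Fintype.sum_prod_type, Set.mem_ofPred_eq, Fintype.sum_bool]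
  refine Finset.sum_congr rfl fun y _ => ?_
  congr 1 <;> convert Finset.sum_ite_eq' Finset.univ z _ <;> simp

theorem p_le_prZ (P : Dist (Obs Y K)) (y : Y) (d : Bool) (z : Fin K) :
    P.p (y, d, z) ≤ prZ P z :=
  P.p_le_pr rfl

theorem obsCond_nonneg (P : Dist (Obs Y K)) (y : Y) (d : Bool) (z : Fin K) :
    0 ≤ obsCond P y d z :=
  div_nonneg (P.nonneg _) (P.pr_nonneg _)

theorem obsCond_mul_prZ (P : Dist (Obs Y K)) (y : Y) (d : Bool) (z : Fin K) :
    obsCond P y d z * prZ P z = P.p (y, d, z) :=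
  div_mul_cancel_of_imp fun h => le_antisymm (h ▸ p_le_prZ P y d z) (P.nonneg _)

theorem pr_coe_fst_eq (P : Dist (Obs Y K)) (y : Y) (d : Bool) (z : Fin K) {r : ℝ}
    (hr : (y : ℝ) = r) :
    P.pr {o | (o.1 : ℝ) = r ∧ o.2.1 = d ∧ o.2.2 = z} = P.p (y, d, z) := by
  subst hr
  rw [← P.pr_singleton]
  congr 1
  ext ⟨y', d', z'⟩
  simp only [Set.mem_ofPred_eq, Set.mem_singleton_iff, Prod.mk.injEq, Subtype.coe_inj]

def ofBool (b : Bool) : Y01 := ⟨if b then 1 else 0, by cases b <;> simp⟩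

@[simp] theorem coe_ofBool_true : (ofBool true : ℝ) = 1 := rfl
@[simp] theorem coe_ofBool_false : (ofBool false : ℝ) = 0 := rfl

theorem ofBool_injective : Function.Injective ofBool := by
  intro a b h
  cases a <;> cases b <;> simp_all [ofBool]

theorem ofBool_surjective : Function.Surjective ofBool := by
  rintro ⟨y, hy⟩
  rcases Finset.mem_insert.mp hy with rfl | hy
  · exact ⟨false, rfl⟩
  · exact ⟨true, Subtype.ext (Finset.mem_singleton.mp hy).symm⟩

theorem ofBool_bijective : Function.Bijective ofBool := ⟨ofBool_injective, ofBool_surjective⟩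

theorem theta_eq_pr {Ps : Dist (Prim Y01 K)} (hrel : ∀ z, Ps.pr {ω | pd ω z true = true} = 1) :
    theta Ps = Ps.pr {ω | (ω.2.1 : ℝ) = 1} := by
  refine Finset.sum_congr rfl fun ω _ => ?_
  by_cases hω : Ps.p ω = 0
  · simp [hω]
  · have hD : pd ω (pz ω) true = true := Ps.mem_of_pr_eq_one (hrel (pz ω)) hω
    obtain ⟨y, hy⟩ := ofBool_surjective ω.2.1
    cases y <;> simp [cfY, hD, ← hy]

theorem theta_mem_bounds {Ps : Dist (Prim Y01 K)} {P : Dist (Obs Y01 K)} (hPs : Ps ∈ famU K)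
    (hgen : generates Ps P) (z : Fin K) :
    obsCond P (ofBool true) true z ≤ theta Ps ∧
      theta Ps ≤ 1 - obsCond P (ofBool false) true z := by
  obtain ⟨hIV, -, hrel⟩ := hPs
  rw [theta_eq_pr hrel]
  constructor
  · convert obsCond_true_le hIV hgen (ofBool true) z using 2
    ext ω
    simp [Subtype.ext_iff]
  · rw [le_sub_comm, ← Dist.pr_compl]
    convert obsCond_true_le hIV hgen (ofBool false) z using 2
    ext ω
    obtain ⟨y, hy⟩ := ofBool_surjective ω.2.1
    cases y <;> simp [← hy, ofBool_injective.eq_iff]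

noncomputable def releaseModel (M : Dist (Bool × (Fin K → Bool))) (π : Dist (Fin K)) :
    Dist (Prim Y01 K) :=
  (M.prod π).map fun x => (ofBool false, ofBool x.1.1, fun z a => a || x.1.2 z, x.2)

section releaseModel

variable (M : Dist (Bool × (Fin K → Bool))) (π : Dist (Fin K))

theorem releaseModel_mem_famU : releaseModel M π ∈ famU K := by
  refine ⟨ivValid_map_prod M π fun m => (ofBool false, ofBool m.1, fun z a => a || m.2 z),
    ?_, fun z => ?_⟩
  all_goals
    rw [releaseModel, Dist.pr_map, ← (M.prod π).pr_univ]
    congr 1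
    ext
    simp [pd]

theorem theta_releaseModel : theta (releaseModel M π) = M.pr {m | m.1 = true} := by
  rw [theta_eq_pr (releaseModel_mem_famU M π).2.2, releaseModel, Dist.pr_map]
  calc _ = (M.prod π).pr ({m | m.1 = true} ×ˢ Set.univ) := by
        congr 1; ext ⟨⟨y, d⟩, z⟩; cases y <;> simp
    _ = _ := by rw [Dist.pr_prod, Dist.pr_univ, mul_one]

theorem releaseModel_pr_obs (y : Y01) (d : Bool) (z : Fin K) :
    (releaseModel M π).pr {ω | obsY ω = y ∧ obsD ω = d ∧ pz ω = z}
      = M.pr {m | m.2 z ∈ {e | (if e then ofBool m.1 else ofBool false) = y ∧ e = d}}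
          * π.p z := by
  rw [releaseModel, Dist.pr_map, ← Dist.pr_singleton, ← Dist.pr_prod]
  congr 1
  ext ⟨⟨y1, dv⟩, z'⟩
  simp only [obsY, obsD, pd, pz, Set.mem_preimage, Set.mem_prod, Set.mem_ofPred_eq,
    Set.mem_singleton_iff, Bool.false_or]
  constructor
  · rintro ⟨hy, hd, rfl⟩
    exact ⟨⟨hy, hd⟩, rfl⟩
  · rintro ⟨⟨hy, hd⟩, rfl⟩
    exact ⟨hy, hd, rfl⟩

end releaseModel

section latentLaw

variable {v : ℝ} (hv : v ∈ Set.Icc (0 : ℝ) 1) {r : Bool → Fin K → ℝ}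
  (hr : ∀ y z, r y z ∈ Set.Icc (0 : ℝ) 1)

noncomputable def latentLaw : Dist (Bool × (Fin K → Bool)) :=
  (Dist.bernoulli v hv.1 hv.2).bind fun y =>
    Dist.pi fun z => Dist.bernoulli (r y z) (hr y z).1 (hr y z).2

theorem latentLaw_pr_eval (z : Fin K) (B : Bool → Set Bool) :
    (latentLaw hv hr).pr {m | m.2 z ∈ B m.1}
      = ∑ y, (Dist.bernoulli v hv.1 hv.2).p y
          * (Dist.bernoulli (r y z) (hr y z).1 (hr y z).2).pr (B y) := by
  rw [latentLaw, Dist.pr_bind]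
  exact Finset.sum_congr rfl fun y _ => congrArg _ (Dist.pr_pi_eval _ z (B y))

theorem latentLaw_pr_fst : (latentLaw hv hr).pr {m | m.1 = true} = v := by
  simp [latentLaw, Dist.pr_bind, Dist.bernoulli, Dist.pr_univ]

end latentLaw

theorem mem_thetaI_of_bounds {P : Dist (Obs Y01 K)}
    (hcons : ∀ z, P.p (ofBool true, false, z) = 0) {v : ℝ} (hv : v ∈ Set.Icc (0 : ℝ) 1)
    (hlow : ∀ z, obsCond P (ofBool true) true z ≤ v)
    (hup : ∀ z, v ≤ 1 - obsCond P (ofBool false) true z) : v ∈ ThetaI P (famU K) := by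
  set a := fun z => obsCond P (ofBool true) true z
  set b := fun z => obsCond P (ofBool false) true z
  have ha : ∀ z, 0 ≤ a z := obsCond_nonneg P _ _
  have hb : ∀ z, 0 ≤ b z := obsCond_nonneg P _ _
  have hr : ∀ (y : Bool) z, (if y then a z / v else b z / (1 - v)) ∈ Set.Icc (0 : ℝ) 1 := by
    rintro (_ | _) z
    · exact ⟨div_nonneg (hb z) (by linarith [hv.2]),
        div_le_one_of_le₀ (by linarith [hup z]) (by linarith [hv.2])⟩
    · exact ⟨div_nonneg (ha z) hv.1, div_le_one_of_le₀ (hlow z) hv.1⟩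
  refine ⟨releaseModel (latentLaw hv hr) (P.map fun o => o.2.2), releaseModel_mem_famU _ _,
    fun y d z => ?_, by rw [theta_releaseModel, latentLaw_pr_fst]⟩
  obtain ⟨c, rfl⟩ := ofBool_surjective y
  rw [releaseModel_pr_obs, latentLaw_pr_eval hv hr z
    (fun y1 => {e | (if e then ofBool y1 else ofBool false) = ofBool c ∧ e = d})]
  -- At `v = 0` (`v = 1`) the bounds force `a z = 0` (`b z = 0`), so `x / 0 = 0` does no harm.
  have hva : v * (a z / v) = a z := by
    rw [mul_div_assoc']
    exact mul_div_cancel_left_of_imp fun h => le_antisymm (h ▸ hlow z) (ha z)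
  have hvb : (1 - v) * (b z / (1 - v)) = b z := by
    rw [mul_div_assoc']
    exact mul_div_cancel_left_of_imp fun h => le_antisymm (by linarith [hup z]) (hb z)
  have hπ : (P.map fun o => o.2.2).p z = prZ P z := rfl
  have hsum := prZ_eq_sum P z
  rw [← (ofBool_bijective).sum_comp] at hsum
  simp only [Fintype.sum_bool] at hsum
  have hza : a z * prZ P z = P.p (ofBool true, true, z) := obsCond_mul_prZ P _ _ z
  have hzb : b z * prZ P z = P.p (ofBool false, true, z) := obsCond_mul_prZ P _ _ z
  cases c <;> cases d <;>
    simp [Dist.pr, Dist.bernoulli, ofBool_injective.eq_iff, hπ, mul_sub, hva, hvb, hcons] <;>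
    linarith [hcons z]

theorem statement10_general {K : ℕ}
    (P : Dist (Obs Y01 K))
    (hcons : ∀ z : Fin K,
      P.pr {o | (o.1 : ℝ) = 1 ∧ o.2.1 = false ∧ o.2.2 = z} = 0) :
    ThetaI P (famU K)
      = (⋂ z : Fin K,
          Set.Icc (P.pr {o | (o.1 : ℝ) = 1 ∧ o.2.1 = true ∧ o.2.2 = z} / prZ P z)
            (1 - P.pr {o | (o.1 : ℝ) = 0 ∧ o.2.1 = true ∧ o.2.2 = z} / prZ P z)) ∧
    ∀ v : ℝ, 0 ≤ v → v ≤ 1 →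
      (v ∈ ThetaI P (famU K) ↔
        ∀ z : Fin K,
          P.pr {o | (o.1 : ℝ) = 1 ∧ o.2.1 = true ∧ o.2.2 = z} / prZ P z ≤ v ∧
          v ≤ 1 - P.pr {o | (o.1 : ℝ) = 0 ∧ o.2.1 = true ∧ o.2.2 = z} / prZ P z) := by
  simp only [pr_coe_fst_eq P (ofBool true) _ _ coe_ofBool_true,
    pr_coe_fst_eq P (ofBool false) _ _ coe_ofBool_false] at hcons ⊢
  have hiff : ∀ v, v ∈ ThetaI P (famU K) ↔ ∀ z,
      obsCond P (ofBool true) true z ≤ v ∧ v ≤ 1 - obsCond P (ofBool false) true z := by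
    refine fun v =>
      ⟨fun ⟨Ps, hPs, hgen, hv⟩ z => hv ▸ theta_mem_bounds hPs hgen z, fun h => ?_⟩
    obtain ⟨⟨-, -, z⟩⟩ := P.nonempty
    have hv : v ∈ Set.Icc (0 : ℝ) 1 :=
      ⟨(obsCond_nonneg P _ _ z).trans (h z).1,
        (h z).2.trans (sub_le_self _ (obsCond_nonneg P _ _ z))⟩
    exact mem_thetaI_of_bounds hcons hv (fun z => (h z).1) (fun z => (h z).2)
  exact ⟨Set.ext fun v => by simpa [obsCond] using hiff v, fun v _ _ => hiff v⟩

/-- under universal release with `Y(0) = 0`, the identified set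
for the average counterfactual outcome is the intersection of the judge-specific
intervals `[P(Y=1, D=1 | Z=z), 1 − P(Y=0, D=1 | Z=z)]`. -/
theorem statement10 {K : ℕ}
    (P : Dist (Obs Y01 K)) (hPz : ∀ z : Fin K, 0 < prZ P z)
    (hcons : ∀ z : Fin K,
      P.pr {o | (o.1 : ℝ) = 1 ∧ o.2.1 = false ∧ o.2.2 = z} = 0) :
    ThetaI P (famU K)
      = (⋂ z : Fin K,
          Set.Icc (P.pr {o | (o.1 : ℝ) = 1 ∧ o.2.1 = true ∧ o.2.2 = z} / prZ P z)
            (1 - P.pr {o | (o.1 : ℝ) = 0 ∧ o.2.1 = true ∧ o.2.2 = z} / prZ P z)) ∧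
    ∀ v : ℝ, 0 ≤ v → v ≤ 1 →
      (v ∈ ThetaI P (famU K) ↔
        ∀ z : Fin K,
          P.pr {o | (o.1 : ℝ) = 1 ∧ o.2.1 = true ∧ o.2.2 = z} / prZ P z ≤ v ∧
          v ≤ 1 - P.pr {o | (o.1 : ℝ) = 0 ∧ o.2.1 = true ∧ o.2.2 = z} / prZ P z) :=
  statement10_general P hcons

end IVPol
end

section
/- Let P* be a primitive distribution satisfying IV validity, and let z_max ∈ 𝒵 satisfy α_max := P*(D(z_max,0)=1) ≥ P*(D(z,0)=1) for all z ∈ 𝒵, with α_max < 1. Suppose P* satisfies the sufficiently strong encouragement condition P*(D(z,1)=0, D(z_max,0)=1) = 0 for all z ∈ 𝒵, and P*(D(Z,1)=1) = α. Then P*(D(Z,1)=1, D(z_max,0)=1) = α_max, and consequently the conditional distribution of D(Z,1) given D(z_max,0)=0 is Bernoulli with parameter (α − α_max)/(1 − α_max); in particular α ≥ α_max. -/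
open Finset
open scoped Classical

namespace IVPol

variable {Y : Finset ℝ} {K : ℕ}

lemma pr_nonneg {α : Type*} [Fintype α] (P : Dist α) (S : Set α) : 0 ≤ P.pr S :=
  Finset.sum_nonneg fun a _ => by split <;> simp [P.nonneg]

lemma pr_congr {α : Type*} [Fintype α] (P : Dist α) {S T : Set α} (h : ∀ a, a ∈ S ↔ a ∈ T) :
    P.pr S = P.pr T := by
  have : S = T := Set.ext h
  rw [this]

lemma pr_split {α : Type*} [Fintype α] (P : Dist α) (S : Set α) (Q : α → Prop) :
    P.pr S = P.pr {a | a ∈ S ∧ Q a} + P.pr {a | a ∈ S ∧ ¬ Q a} := by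
  simp only [Dist.pr, ← Finset.sum_add_distrib]
  refine Finset.sum_congr rfl fun a _ => ?_
  by_cases hS : a ∈ S <;> by_cases hQ : Q a <;> simp [hS, hQ]


lemma sum_ite_prim (Ps : Dist (Prim Y K)) (S : Set (Prim Y K)) :
    Ps.pr S = ∑ a, ∑ b, ∑ g, ∑ w, if (a, b, g, w) ∈ S then Ps.p (a, b, g, w) else 0 := by
  rw [Dist.pr, Fintype.sum_prod_type]
  refine Finset.sum_congr rfl fun a _ => ?_
  rw [Fintype.sum_prod_type]
  refine Finset.sum_congr rfl fun b _ => ?_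
  rw [Fintype.sum_prod_type]

/-- Expansion lemma A: event determined by `(Y(0), Y(1), D)` intersected with `Z = z`. -/
lemma prA (Ps : Dist (Prim Y K)) (R : Y → Y → (Fin K → Bool → Bool) → Prop) (z : Fin K) :
    Ps.pr {ω | R ω.1 ω.2.1 ω.2.2.1 ∧ ω.2.2.2 = z}
      = ∑ a, ∑ b, ∑ g, if R a b g then Ps.p (a, b, g, z) else 0 := by
  rw [sum_ite_prim]
  refine Finset.sum_congr rfl fun a _ => ?_
  refine Finset.sum_congr rfl fun b _ => ?_
  refine Finset.sum_congr rfl fun g _ => ?_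
  by_cases hR : R a b g
  · rw [if_pos hR, Finset.sum_eq_single_of_mem z (Finset.mem_univ z)]
    · exact if_pos ⟨hR, rfl⟩
    · intro w _ hw
      exact if_neg fun h => hw h.2
  · rw [if_neg hR]
    exact Finset.sum_eq_zero fun w _ => if_neg fun h => hR h.1

/-- Expansion lemma B: event determined by `(Y(0), Y(1), D)`. -/
lemma prB (Ps : Dist (Prim Y K)) (R : Y → Y → (Fin K → Bool → Bool) → Prop) :
    Ps.pr {ω | R ω.1 ω.2.1 ω.2.2.1}
      = ∑ a, ∑ b, ∑ g, if R a b g then ∑ z, Ps.p (a, b, g, z) else 0 := by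
  rw [sum_ite_prim]
  refine Finset.sum_congr rfl fun a _ => ?_
  refine Finset.sum_congr rfl fun b _ => ?_
  refine Finset.sum_congr rfl fun g _ => ?_
  by_cases hR : R a b g
  · rw [if_pos hR]
    exact Finset.sum_congr rfl fun w _ => if_pos hR
  · rw [if_neg hR]
    exact Finset.sum_eq_zero fun w _ => if_neg hR

lemma pr_point (Ps : Dist (Prim Y K)) (a b : Y) (g : Fin K → Bool → Bool) (z : Fin K) :
    Ps.pr {ω | ω.1 = a ∧ ω.2.1 = b ∧ ω.2.2.1 = g ∧ ω.2.2.2 = z} = Ps.p (a, b, g, z) := by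
  have h := prA Ps (fun x y h => x = a ∧ y = b ∧ h = g) z
  have h' : Ps.pr {ω : Prim Y K | ω.1 = a ∧ ω.2.1 = b ∧ ω.2.2.1 = g ∧ ω.2.2.2 = z}
      = Ps.pr {ω : Prim Y K | (ω.1 = a ∧ ω.2.1 = b ∧ ω.2.2.1 = g) ∧ ω.2.2.2 = z} :=
    pr_congr Ps fun ω => by simp only [Set.mem_setOf_eq]; tauto
  rw [h', h]
  refine (Finset.sum_eq_single_of_mem a (Finset.mem_univ a) fun a' _ ha' =>
    Finset.sum_eq_zero fun b' _ => Finset.sum_eq_zero fun g' _ =>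
      if_neg fun h => ha' h.1).trans ?_
  refine (Finset.sum_eq_single_of_mem b (Finset.mem_univ b) fun b' _ hb' =>
    Finset.sum_eq_zero fun g' _ => if_neg fun h => hb' h.2.1).trans ?_
  refine (Finset.sum_eq_single_of_mem g (Finset.mem_univ g) fun g' _ hg' =>
    if_neg fun h => hg' h.2.2).trans ?_
  exact if_pos ⟨rfl, rfl, rfl⟩

lemma pr_g (Ps : Dist (Prim Y K)) (a b : Y) (g : Fin K → Bool → Bool) :
    Ps.pr {ω | ω.1 = a ∧ ω.2.1 = b ∧ ω.2.2.1 = g} = ∑ z, Ps.p (a, b, g, z) := by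
  have h := prB Ps (fun x y h => x = a ∧ y = b ∧ h = g)
  rw [h]
  refine (Finset.sum_eq_single_of_mem a (Finset.mem_univ a) fun a' _ ha' =>
    Finset.sum_eq_zero fun b' _ => Finset.sum_eq_zero fun g' _ =>
      if_neg fun h => ha' h.1).trans ?_
  refine (Finset.sum_eq_single_of_mem b (Finset.mem_univ b) fun b' _ hb' =>
    Finset.sum_eq_zero fun g' _ => if_neg fun h => hb' h.2.1).trans ?_
  refine (Finset.sum_eq_single_of_mem g (Finset.mem_univ g) fun g' _ hg' =>
    if_neg fun h => hg' h.2.2).trans ?_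
  exact if_pos ⟨rfl, rfl, rfl⟩

lemma pr_fiber (Ps : Dist (Prim Y K)) (hvalid : IVvalid Ps)
    (Q : (Fin K → Bool → Bool) → Prop) (z : Fin K) :
    Ps.pr {ω | Q ω.2.2.1 ∧ ω.2.2.2 = z}
      = Ps.pr {ω | Q ω.2.2.1} * Ps.pr {ω | ω.2.2.2 = z} := by
  have hL : Ps.pr {ω : Prim Y K | Q ω.2.2.1 ∧ ω.2.2.2 = z}
      = ∑ a, ∑ b, ∑ g, if Q g then Ps.p (a, b, g, z) else 0 := prA Ps (fun _ _ g => Q g) z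
  have hR : Ps.pr {ω : Prim Y K | Q ω.2.2.1}
      = ∑ a, ∑ b, ∑ g, if Q g then ∑ w, Ps.p (a, b, g, w) else 0 := prB Ps (fun _ _ g => Q g)
  rw [hL, hR, Finset.sum_mul]
  refine Finset.sum_congr rfl fun a _ => ?_
  rw [Finset.sum_mul]
  refine Finset.sum_congr rfl fun b _ => ?_
  rw [Finset.sum_mul]
  refine Finset.sum_congr rfl fun g _ => ?_
  by_cases h : Q g
  · rw [if_pos h, if_pos h]
    have hv := hvalid a b g z
    rw [pr_point, pr_g] at hv
    exact hv
  · rw [if_neg h, if_neg h, zero_mul]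

lemma pr_z_eq (Ps : Dist (Prim Y K)) (z : Fin K) :
    Ps.pr {ω | ω.2.2.2 = z} = ∑ a, ∑ b, ∑ g, Ps.p (a, b, g, z) := by
  have h : Ps.pr {ω : Prim Y K | ω.2.2.2 = z}
      = Ps.pr {ω : Prim Y K | (True : Prop) ∧ ω.2.2.2 = z} := pr_congr Ps fun ω => by simp only [Set.mem_setOf_eq]; tauto
  rw [h, prA Ps (fun _ _ _ => True) z]
  refine Finset.sum_congr rfl fun a _ => Finset.sum_congr rfl fun b _ =>
    Finset.sum_congr rfl fun g _ => if_pos trivial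

lemma sum_przz (Ps : Dist (Prim Y K)) : ∑ z, Ps.pr {ω : Prim Y K | ω.2.2.2 = z} = 1 := by
  simp only [pr_z_eq]
  have h1 := Ps.sum_one
  rw [Fintype.sum_prod_type] at h1
  simp only [Fintype.sum_prod_type] at h1
  rw [← h1, Finset.sum_comm]
  refine Finset.sum_congr rfl fun a _ => ?_
  rw [Finset.sum_comm]
  refine Finset.sum_congr rfl fun b _ => ?_
  rw [Finset.sum_comm]

lemma pr_Z_decomp (Ps : Dist (Prim Y K)) (Q : (Fin K → Bool → Bool) → Fin K → Prop) :
    Ps.pr {ω | Q ω.2.2.1 ω.2.2.2} = ∑ z, Ps.pr {ω | Q ω.2.2.1 z ∧ ω.2.2.2 = z} := by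
  have h : ∀ z : Fin K, Ps.pr {ω : Prim Y K | Q ω.2.2.1 z ∧ ω.2.2.2 = z}
      = ∑ a, ∑ b, ∑ g, if Q g z then Ps.p (a, b, g, z) else 0 :=
    fun z => prA Ps (fun _ _ g => Q g z) z
  simp only [h]
  rw [sum_ite_prim]
  conv_rhs => rw [Finset.sum_comm]
  refine Finset.sum_congr rfl fun a _ => ?_
  conv_rhs => rw [Finset.sum_comm]
  refine Finset.sum_congr rfl fun b _ => ?_
  conv_rhs => rw [Finset.sum_comm]
  refine Finset.sum_congr rfl fun g _ => ?_
  exact Finset.sum_congr rfl fun w _ => if_congr Iff.rfl rfl rfl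


/-- under IV validity and a sufficiently strong encouragement,
everyone released by the most lenient judge under the status quo is released under
the counterfactual; consequently the conditional distribution of `D(Z,1)` given
`D(z_max,0) = 0` is Bernoulli with parameter `(α − α_max)/(1 − α_max)`, and in
particular `α ≥ α_max`. -/
theorem statement12 {Y : Finset ℝ} {K : ℕ}
    (Ps : Dist (Prim Y K)) (hvalid : IVvalid Ps)
    (zmax : Fin K) (α αmax : ℝ)
    (hαmax : Ps.pr {ω | pd ω zmax false = true} = αmax)
    (hmax : ∀ z : Fin K, Ps.pr {ω | pd ω z false = true} ≤ αmax)
    (hlt : αmax < 1)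
    (henc : ∀ z : Fin K,
      Ps.pr {ω | pd ω z true = false ∧ pd ω zmax false = true} = 0)
    (hα : Ps.pr {ω | pd ω (pz ω) true = true} = α) :
    Ps.pr {ω | pd ω (pz ω) true = true ∧ pd ω zmax false = true} = αmax ∧
    Ps.pr {ω | pd ω (pz ω) true = true ∧ pd ω zmax false = false}
        / Ps.pr {ω | pd ω zmax false = false} = (α - αmax) / (1 - αmax) ∧
    αmax ≤ α := by
  simp only [pd, pz] at hαmax henc hα ⊢
  -- Step 1: for every z, P(D(z,1)=1, D(zmax,0)=1) = αmax
  have key : ∀ z : Fin K,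
      Ps.pr {ω : Prim Y K | ω.2.2.1 z true = true ∧ ω.2.2.1 zmax false = true} = αmax := by
    intro z
    have hs := pr_split Ps {ω : Prim Y K | ω.2.2.1 zmax false = true}
      (fun ω => ω.2.2.1 z true = true)
    have h1 : Ps.pr {ω : Prim Y K |
          ω ∈ {ω : Prim Y K | ω.2.2.1 zmax false = true} ∧ ω.2.2.1 z true = true}
        = Ps.pr {ω : Prim Y K | ω.2.2.1 z true = true ∧ ω.2.2.1 zmax false = true} :=
      pr_congr Ps fun ω => by simp only [Set.mem_setOf_eq]; tauto
    have h2 : Ps.pr {ω : Prim Y K |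
          ω ∈ {ω : Prim Y K | ω.2.2.1 zmax false = true} ∧ ¬ (ω.2.2.1 z true = true)}
        = Ps.pr {ω : Prim Y K | ω.2.2.1 z true = false ∧ ω.2.2.1 zmax false = true} :=
      pr_congr Ps fun ω => by simp only [Set.mem_setOf_eq, Bool.not_eq_true]; tauto
    rw [h1, h2, hαmax, henc z] at hs
    linarith
  -- Step 2: the first claim
  have hA : Ps.pr {ω : Prim Y K | ω.2.2.1 ω.2.2.2 true = true ∧ ω.2.2.1 zmax false = true}
      = αmax := by
    have hd : Ps.pr {ω : Prim Y K | ω.2.2.1 ω.2.2.2 true = true ∧ ω.2.2.1 zmax false = true}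
        = ∑ z, Ps.pr {ω : Prim Y K |
            (ω.2.2.1 z true = true ∧ ω.2.2.1 zmax false = true) ∧ ω.2.2.2 = z} :=
      pr_Z_decomp Ps (fun g z => g z true = true ∧ g zmax false = true)
    have hterm : ∀ z : Fin K, Ps.pr {ω : Prim Y K |
          (ω.2.2.1 z true = true ∧ ω.2.2.1 zmax false = true) ∧ ω.2.2.2 = z}
        = αmax * Ps.pr {ω : Prim Y K | ω.2.2.2 = z} := by
      intro z
      have hf : Ps.pr {ω : Prim Y K |
            (ω.2.2.1 z true = true ∧ ω.2.2.1 zmax false = true) ∧ ω.2.2.2 = z}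
          = Ps.pr {ω : Prim Y K | ω.2.2.1 z true = true ∧ ω.2.2.1 zmax false = true}
            * Ps.pr {ω : Prim Y K | ω.2.2.2 = z} :=
        pr_fiber Ps hvalid (fun g => g z true = true ∧ g zmax false = true) z
      rw [hf, key z]
    rw [hd]
    simp only [hterm]
    rw [← Finset.mul_sum, sum_przz, mul_one]
  -- Step 3: split α
  have hB : Ps.pr {ω : Prim Y K | ω.2.2.1 ω.2.2.2 true = true ∧ ω.2.2.1 zmax false = false}
      = α - αmax := by
    have hs := pr_split Ps {ω : Prim Y K | ω.2.2.1 ω.2.2.2 true = true}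
      (fun ω => ω.2.2.1 zmax false = true)
    have h1 : Ps.pr {ω : Prim Y K |
          ω ∈ {ω : Prim Y K | ω.2.2.1 ω.2.2.2 true = true} ∧ ω.2.2.1 zmax false = true}
        = Ps.pr {ω : Prim Y K | ω.2.2.1 ω.2.2.2 true = true ∧ ω.2.2.1 zmax false = true} :=
      pr_congr Ps fun ω => Iff.rfl
    have h2 : Ps.pr {ω : Prim Y K |
          ω ∈ {ω : Prim Y K | ω.2.2.1 ω.2.2.2 true = true} ∧ ¬ (ω.2.2.1 zmax false = true)}
        = Ps.pr {ω : Prim Y K | ω.2.2.1 ω.2.2.2 true = true ∧ ω.2.2.1 zmax false = false} :=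
      pr_congr Ps fun ω => by simp only [Set.mem_setOf_eq, Bool.not_eq_true]
    rw [h1, h2, hα, hA] at hs
    linarith
  -- Step 4: the denominator
  have hdenom : Ps.pr {ω : Prim Y K | ω.2.2.1 zmax false = false} = 1 - αmax := by
    have hu : Ps.pr (Set.univ : Set (Prim Y K)) = 1 := by
      rw [Dist.pr, ← Ps.sum_one]
      exact Finset.sum_congr rfl fun ω _ => if_pos (Set.mem_univ ω)
    have hs := pr_split Ps (Set.univ : Set (Prim Y K)) (fun ω => ω.2.2.1 zmax false = true)
    have h1 : Ps.pr {ω : Prim Y K | ω ∈ (Set.univ : Set (Prim Y K)) ∧ ω.2.2.1 zmax false = true}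
        = Ps.pr {ω : Prim Y K | ω.2.2.1 zmax false = true} :=
      pr_congr Ps fun ω => by simp
    have h2 : Ps.pr {ω : Prim Y K |
          ω ∈ (Set.univ : Set (Prim Y K)) ∧ ¬ (ω.2.2.1 zmax false = true)}
        = Ps.pr {ω : Prim Y K | ω.2.2.1 zmax false = false} :=
      pr_congr Ps fun ω => by simp [Bool.not_eq_true]
    rw [h1, h2, hαmax, hu] at hs
    linarith
  have hBnn := pr_nonneg Ps
    {ω : Prim Y K | ω.2.2.1 ω.2.2.2 true = true ∧ ω.2.2.1 zmax false = false}
  refine ⟨hA, ?_, by linarith⟩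
  rw [hB, hdenom]


end IVPol
end

section
/- Let 𝒴 ⊆ ℝ be bounded, let (Y(0), Y(1), (D(z,a))_{z∈𝒵, a∈{0,1}}) be a random vector with Y(0), Y(1) ∈ 𝒴 and D(z,a) ∈ {0,1}, and let Z_Q and Z_{Q^c} be 𝒵-valued random variables jointly independent of (Y(0), Y(1), (D(z,a))_{z,a}). Then (a) E[Y(D(Z_Q,1)) − Y(D(Z_{Q^c},1))] = E[(Y(1)−Y(0)) · 1{D(Z_Q,1)=1, D(Z_{Q^c},1)=0}] − E[(Y(1)−Y(0)) · 1{D(Z_Q,1)=0, D(Z_{Q^c},1)=1}]; and (b) if P(D(Z_Q,1)=1) = P(D(Z_{Q^c},1)=1), then P(D(Z_Q,1)=1, D(Z_{Q^c},1)=0) = P(D(Z_Q,1)=0, D(Z_{Q^c},1)=1), so the counterfactual outcome disparity between the two groups equals this common disagreement probability times the difference in average treatment effects across the two disagreement events. -/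
open MeasureTheory

namespace IVGroups

/-- Sample space: the primitives `(Y(0), Y(1), D(·,·))` together with the two
randomly drawn judges `Z_Q` and `Z_{Q^c}`. -/
abbrev Om (K : ℕ) := (ℝ × ℝ × (Fin K → Bool → Bool)) × Fin K × Fin K

variable {K : ℕ}

/-- Potential outcome `Y(0)`. -/
def y0v (ω : Om K) : ℝ := ω.1.1

/-- Potential outcome `Y(1)`. -/
def y1v (ω : Om K) : ℝ := ω.1.2.1

/-- Counterfactual treatment of the judge drawn from group `Q`: `D(Z_Q, 1)`. -/
def DQ (ω : Om K) : Bool := ω.1.2.2 ω.2.1 true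

/-- Counterfactual treatment of the judge drawn from group `Q^c`: `D(Z_{Q^c}, 1)`. -/
def DQc (ω : Om K) : Bool := ω.1.2.2 ω.2.2 true

/-- Counterfactual outcome `Y(D(Z_Q, 1))`. -/
noncomputable def YDQ (ω : Om K) : ℝ := if DQ ω then y1v ω else y0v ω

/-- Counterfactual outcome `Y(D(Z_{Q^c}, 1))`. -/
noncomputable def YDQc (ω : Om K) : ℝ := if DQc ω then y1v ω else y0v ω

/-- Disagreement event `{D(Z_Q,1) = 1, D(Z_{Q^c},1) = 0}`. -/
def C1 (K : ℕ) : Set (Om K) := {ω | DQ ω = true ∧ DQc ω = false}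

/-- Disagreement event `{D(Z_Q,1) = 0, D(Z_{Q^c},1) = 1}`. -/
def C2 (K : ℕ) : Set (Om K) := {ω | DQ ω = false ∧ DQc ω = true}

lemma meas_eval : Measurable (fun p : (Fin K → Bool → Bool) × Fin K => p.1 p.2 true) :=
  measurable_of_countable _

lemma meas_DQ : Measurable (DQ (K := K)) := by
  have : (DQ (K := K)) = (fun p : (Fin K → Bool → Bool) × Fin K => p.1 p.2 true) ∘
      (fun ω : Om K => (ω.1.2.2, ω.2.1)) := rfl
  rw [this]
  exact meas_eval.comp ((measurable_snd.comp (measurable_snd.comp measurable_fst)).prodMk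
    (measurable_fst.comp measurable_snd))

lemma meas_DQc : Measurable (DQc (K := K)) := by
  have : (DQc (K := K)) = (fun p : (Fin K → Bool → Bool) × Fin K => p.1 p.2 true) ∘
      (fun ω : Om K => (ω.1.2.2, ω.2.2)) := rfl
  rw [this]
  exact meas_eval.comp ((measurable_snd.comp (measurable_snd.comp measurable_fst)).prodMk
    (measurable_snd.comp measurable_snd))

lemma meas_C1 : MeasurableSet (C1 K) := by
  have h : C1 K = DQ ⁻¹' {true} ∩ DQc ⁻¹' {false} := Set.ext fun ω => by
    simp only [C1, Set.mem_setOf_eq, Set.mem_inter_iff, Set.mem_preimage,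
      Set.mem_singleton_iff]
  rw [h]
  exact (meas_DQ (MeasurableSet.singleton true)).inter
    (meas_DQc (MeasurableSet.singleton false))

lemma meas_C2 : MeasurableSet (C2 K) := by
  have h : C2 K = DQ ⁻¹' {false} ∩ DQc ⁻¹' {true} := Set.ext fun ω => by
    simp only [C2, Set.mem_setOf_eq, Set.mem_inter_iff, Set.mem_preimage,
      Set.mem_singleton_iff]
  rw [h]
  exact (meas_DQ (MeasurableSet.singleton false)).inter
    (meas_DQc (MeasurableSet.singleton true))

lemma meas_y0 : Measurable (y0v (K := K)) := measurable_fst.comp measurable_fst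

lemma meas_y1 : Measurable (y1v (K := K)) :=
  (measurable_fst.comp measurable_snd).comp measurable_fst

/-- Pointwise identity behind part (a). -/
lemma pointwise_key (ω : Om K) :
    YDQ ω - YDQc ω
      = Set.indicator (C1 K) (fun ω => y1v ω - y0v ω) ω
        - Set.indicator (C2 K) (fun ω => y1v ω - y0v ω) ω := by
  classical
  unfold YDQ YDQc
  rcases h1 : DQ ω <;> rcases h2 : DQc ω <;>
    simp [Set.indicator_apply, C1, C2, Set.mem_setOf_eq, h1, h2]

set_option synthInstance.maxHeartbeats 1000000 in
set_option maxHeartbeats 1000000 in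
/-- (a) the counterfactual outcome disparity between the two
groups of judges equals the difference of the treatment-effect contributions on
the two disagreement events; (b) if the two groups have the same counterfactual
release rate, the two disagreement events have equal probability, and the outcome
disparity equals this common disagreement probability times the difference in
average treatment effects across the two disagreement events. -/
theorem statement14 {K : ℕ} (𝒴 : Set ℝ) (hb : Bornology.IsBounded 𝒴)
    (μ : Measure (Om K)) [IsProbabilityMeasure μ]
    (hsupp : μ {ω | y0v ω ∈ 𝒴 ∧ y1v ω ∈ 𝒴} = 1)
    (hindep : ∀ (A : Set (ℝ × ℝ × (Fin K → Bool → Bool))) (q q' : Fin K),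
      MeasurableSet A →
        μ {ω | ω.1 ∈ A ∧ ω.2 = (q, q')}
          = μ {ω | ω.1 ∈ A} * μ {ω | ω.2 = (q, q')}) :
    (∫ ω, (YDQ ω - YDQc ω) ∂μ
        = (∫ ω in C1 K, (y1v ω - y0v ω) ∂μ)
          - ∫ ω in C2 K, (y1v ω - y0v ω) ∂μ) ∧
    (μ {ω | DQ ω = true} = μ {ω | DQc ω = true} →
      μ (C1 K) = μ (C2 K) ∧
      ∫ ω, (YDQ ω - YDQc ω) ∂μ
        = (μ (C1 K)).toReal *
            ((∫ ω in C1 K, (y1v ω - y0v ω) ∂μ) / (μ (C1 K)).toReal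
              - (∫ ω in C2 K, (y1v ω - y0v ω) ∂μ) / (μ (C2 K)).toReal)) := by
  classical
  -- bound on 𝒴
  obtain ⟨M, hM⟩ := isBounded_iff_forall_norm_le.1 hb
  -- a.e. bound for y0v, y1v
  set T : Set (Om K) := {ω | ‖y0v ω‖ ≤ M ∧ ‖y1v ω‖ ≤ M} with hT
  have hTmeas : MeasurableSet T := by
    exact (measurableSet_le meas_y0.norm measurable_const).inter
      (measurableSet_le meas_y1.norm measurable_const)
  have hsub : {ω : Om K | y0v ω ∈ 𝒴 ∧ y1v ω ∈ 𝒴} ⊆ T := fun ω hω =>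
    ⟨hM _ hω.1, hM _ hω.2⟩
  have hT1 : μ T = 1 := le_antisymm prob_le_one (hsupp ▸ measure_mono hsub)
  have hc : μ Tᶜ = 0 := by
    rw [measure_compl hTmeas (measure_ne_top μ T), hT1, measure_univ, tsub_self]
  have hae : ∀ᵐ ω ∂μ, ω ∈ T := by
    rw [MeasureTheory.ae_iff]; exact hc
  -- integrability of h := y1 - y0
  have hint : Integrable (fun ω => y1v ω - y0v ω) μ := by
    refine ⟨(meas_y1.sub meas_y0).aestronglyMeasurable, ?_⟩
    apply HasFiniteIntegral.of_bounded (C := M + M)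
    filter_upwards [hae] with ω hω
    calc ‖y1v ω - y0v ω‖ ≤ ‖y1v ω‖ + ‖y0v ω‖ := norm_sub_le _ _
      _ ≤ M + M := add_le_add hω.2 hω.1
  have hint1 : Integrable (Set.indicator (C1 K) (fun ω => y1v ω - y0v ω)) μ :=
    hint.indicator meas_C1
  have hint2 : Integrable (Set.indicator (C2 K) (fun ω => y1v ω - y0v ω)) μ :=
    hint.indicator meas_C2
  -- part (a)
  have partA : ∫ ω, (YDQ ω - YDQc ω) ∂μ
      = (∫ ω in C1 K, (y1v ω - y0v ω) ∂μ)
        - ∫ ω in C2 K, (y1v ω - y0v ω) ∂μ := by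
    calc ∫ ω, (YDQ ω - YDQc ω) ∂μ
        = ∫ ω, (Set.indicator (C1 K) (fun ω => y1v ω - y0v ω) ω
            - Set.indicator (C2 K) (fun ω => y1v ω - y0v ω) ω) ∂μ := by
          exact integral_congr_ae (Filter.Eventually.of_forall pointwise_key)
      _ = (∫ ω, Set.indicator (C1 K) (fun ω => y1v ω - y0v ω) ω ∂μ)
            - ∫ ω, Set.indicator (C2 K) (fun ω => y1v ω - y0v ω) ω ∂μ :=
          integral_sub hint1 hint2
      _ = (∫ ω in C1 K, (y1v ω - y0v ω) ∂μ) - ∫ ω in C2 K, (y1v ω - y0v ω) ∂μ := by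
          rw [integral_indicator meas_C1, integral_indicator meas_C2]
  refine ⟨partA, fun hrate => ?_⟩
  -- part (b): equality of disagreement probabilities
  set B : Set (Om K) := {ω | DQ ω = true ∧ DQc ω = true} with hB
  have hBmeas : MeasurableSet B := by
    have h : B = DQ ⁻¹' {true} ∩ DQc ⁻¹' {true} := Set.ext fun ω => by
      simp only [hB, Set.mem_setOf_eq, Set.mem_inter_iff, Set.mem_preimage,
        Set.mem_singleton_iff]
    rw [h]
    exact (meas_DQ (MeasurableSet.singleton true)).inter
      (meas_DQc (MeasurableSet.singleton true))
  have hsplit1 : {ω : Om K | DQ ω = true} = C1 K ∪ B := Set.ext fun ω => by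
    simp only [C1, hB, Set.mem_setOf_eq, Set.mem_union]
    rcases h : DQc ω <;> simp [h]
  have hsplit2 : {ω : Om K | DQc ω = true} = C2 K ∪ B := Set.ext fun ω => by
    simp only [C2, hB, Set.mem_setOf_eq, Set.mem_union]
    rcases h : DQ ω <;> simp [h]
  have hd1 : Disjoint (C1 K) B := by
    rw [Set.disjoint_left]; rintro ω ⟨-, h2⟩ ⟨-, h2'⟩; simp [h2'] at h2
  have hd2 : Disjoint (C2 K) B := by
    rw [Set.disjoint_left]; rintro ω ⟨h1, -⟩ ⟨h1', -⟩; simp [h1'] at h1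
  have heq : μ (C1 K) + μ B = μ (C2 K) + μ B := by
    rw [← measure_union hd1 hBmeas, ← measure_union hd2 hBmeas, ← hsplit1, ← hsplit2]
    exact hrate
  have hC12 : μ (C1 K) = μ (C2 K) :=
    WithTop.add_right_cancel (measure_ne_top μ B) heq
  refine ⟨hC12, ?_⟩
  rw [partA, ← hC12]
  by_cases h0 : μ (C1 K) = 0
  · have h2 : μ (C2 K) = 0 := hC12 ▸ h0
    rw [MeasureTheory.Measure.restrict_eq_zero.2 h0, MeasureTheory.Measure.restrict_eq_zero.2 h2]
    simp [h0]
  · have hne : (μ (C1 K)).toReal ≠ 0 :=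
      ENNReal.toReal_ne_zero.2 ⟨h0, measure_ne_top μ _⟩
    field_simp

end IVGroups
end
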